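/- (Lipschitz bound for the approximate unstable-leaf maps Ψ^j.) For every j ≥ 1 and all y₁, y₂ ∈ Y one has ‖Ψ^j(y₁) − Ψ^j(y₂)‖ ≤ (δ/(σ−α)) · (1/(1−κ)) · ‖y₁ − y₂‖. -/

import Mathlib

open MeasureTheory

noncomputable section

variable {X Y : Type*} [NormedAddCommGroup X] [NormedSpace ℝ X] [CompleteSpace X]
  [NormedAddCommGroup Y] [NormedSpace ℝ Y] [CompleteSpace Y]

/-- The weighted sup-norm `‖ψ‖_σ = sup_{t ≤ 0} e^{-σ t} ‖ψ t‖` on `(-∞,0]`. -/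
noncomputable def normSigmaNeg {E : Type*} [NormedAddCommGroup E] (σ : ℝ) (ψ : ℝ → E) : ℝ :=
  sSup {r : ℝ | ∃ t : ℝ, t ≤ 0 ∧ r = Real.exp (-(σ * t)) * ‖ψ t‖}

/-- Membership in the Banach space `G_σ` of continuous functions on `(-∞,0]` with
finite weighted sup-norm. -/
def memGsigma {E : Type*} [NormedAddCommGroup E] (σ : ℝ) (ψ : ℝ → E) : Prop :=
  ContinuousOn ψ (Set.Iic 0) ∧
    BddAbove {r : ℝ | ∃ t : ℝ, t ≤ 0 ∧ r = Real.exp (-(σ * t)) * ‖ψ t‖}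

/-- The Lyapunov–Perron map `U(ψ, y)` for the inertial manifold (unstable leaf): the
`X`-component is `∫_{−∞}^t e^{(t−s)A} F(ψ(s)) ds` and the `Y`-component is
`e^{tB} y − ∫_t^0 e^{(t−s)B} G(ψ(s)) ds`. -/
noncomputable def Umap (A : X →L[ℝ] X) (B : Y →L[ℝ] Y)
    (F : X × Y → X) (G : X × Y → Y) (ψ : ℝ → X × Y) (y : Y) (t : ℝ) : X × Y :=
  (∫ s in Set.Iic t, NormedSpace.exp ((t - s) • A) (F (ψ s)),
    NormedSpace.exp (t • B) y -
      ∫ s in t..(0:ℝ), NormedSpace.exp ((t - s) • B) (G (ψ s)))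

/-- The iterates `ψ⁰(y)(t) = (0, e^{βt} y)`, `ψ^{j+1}(y) = U(ψ^j(y), y)`. -/
noncomputable def psiIter (A : X →L[ℝ] X) (B : Y →L[ℝ] Y)
    (F : X × Y → X) (G : X × Y → Y) (β : ℝ) :
    ℕ → Y → ℝ → X × Y
  | 0 => fun y t => ((0 : X), Real.exp (β * t) • y)
  | j + 1 => fun y => Umap A B F G (psiIter A B F G β j y) y

/-!
Measure the iterates in the weighted norm `sup_{t ≤ 0} e^{-σt} ‖ψ t‖`. Convolving a forcing
bounded by `K e^{σs}` with `e^{(t-s)A}` over `(-∞, t]` gives at most `K e^{σt} / (σ - α)`, and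
with `e^{(t-s)B}` over `[t, 0]` at most `K e^{σt} / (β - σ)`. Since `H` is `δ`-Lipschitz, a bound
`L ‖y₁ - y₂‖ e^{σt}` on `ψ(y₁) - ψ(y₂)` thus becomes `(1 + κ L) ‖y₁ - y₂‖ e^{σt}` for
`U(ψ(y₁), y₁) - U(ψ(y₂), y₂)`, the `1` accounting for `e^{tB} (y₁ - y₂)`. The value
`L = (1 - κ)⁻¹` is the fixed point of `L ↦ 1 + κ L` and dominates `ψ⁰`, so it bounds every
iterate; the `X`-component of one further application of `U` at `t = 0` contributes the factor
`δ / (σ - α)`.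
-/

open Set Real

section ExpWeightedIntegrals

variable {E : Type*} [NormedAddCommGroup E] {g : ℝ → E} {K c : ℝ}

theorem integrableOn_Iic_of_norm_le_mul_exp {t : ℝ} (hc : 0 < c)
    (hg : AEStronglyMeasurable g (volume.restrict (Iic t)))
    (hb : ∀ s ≤ t, ‖g s‖ ≤ K * exp (c * s)) : IntegrableOn g (Iic t) :=
  ((integrableOn_exp_mul_Iic hc t).const_mul K).mono' hg
    (ae_restrict_of_forall_mem measurableSet_Iic hb)

theorem integrableOn_Ioc_of_norm_le_mul_exp {a b : ℝ}
    (hg : AEStronglyMeasurable g (volume.restrict (Ioc a b)))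
    (hb : ∀ s ∈ Ioc a b, ‖g s‖ ≤ K * exp (c * s)) : IntegrableOn g (Ioc a b) :=
  (by fun_prop : Continuous fun s => K * exp (c * s)).integrableOn_Ioc.mono' hg
    (ae_restrict_of_forall_mem measurableSet_Ioc hb)

variable [NormedSpace ℝ E]

theorem norm_setIntegral_Iic_le_of_norm_le_mul_exp {t : ℝ} (hc : 0 < c)
    (hb : ∀ s ≤ t, ‖g s‖ ≤ K * exp (c * s)) :
    ‖∫ s in Iic t, g s‖ ≤ K * exp (c * t) / c :=
  calc ‖∫ s in Iic t, g s‖ ≤ ∫ s in Iic t, K * exp (c * s) :=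
        norm_integral_le_of_norm_le ((integrableOn_exp_mul_Iic hc t).const_mul K)
          (ae_restrict_of_forall_mem measurableSet_Iic hb)
    _ = K * exp (c * t) / c := by rw [integral_const_mul, integral_exp_mul_Iic hc, mul_div_assoc]

theorem norm_setIntegral_Ioc_le_of_norm_le_mul_exp {a b : ℝ} (hc : c < 0) (hK : 0 ≤ K)
    (hb : ∀ s ∈ Ioc a b, ‖g s‖ ≤ K * exp (c * s)) :
    ‖∫ s in Ioc a b, g s‖ ≤ K * exp (c * a) / -c := by
  have hint : IntegrableOn (fun s => K * exp (c * s)) (Ioi a) :=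
    (integrableOn_exp_mul_Ioi hc a).const_mul K
  calc ‖∫ s in Ioc a b, g s‖ ≤ ∫ s in Ioc a b, K * exp (c * s) :=
        norm_integral_le_of_norm_le (hint.mono_set Ioc_subset_Ioi_self)
          (ae_restrict_of_forall_mem measurableSet_Ioc hb)
    _ ≤ ∫ s in Ioi a, K * exp (c * s) :=
        setIntegral_mono_set hint (ae_of_all _ fun s => by positivity)
          Ioc_subset_Ioi_self.eventuallyLE
    _ = K * exp (c * a) / -c := by
        rw [integral_const_mul, integral_exp_mul_Ioi hc]; ring

end ExpWeightedIntegrals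

theorem continuous_exp_smul {𝔸 : Type*} [NormedRing 𝔸] [NormedAlgebra ℝ 𝔸] [CompleteSpace 𝔸]
    (T : 𝔸) : Continuous fun u : ℝ => NormedSpace.exp (u • T) :=
  continuous_iff_continuousAt.2 fun u => (hasDerivAt_exp_smul_const T u).continuousAt

theorem MeasureTheory.StronglyMeasurable.integral_restrict_preimage_prodMk {α β E : Type*}
    [MeasurableSpace α] [MeasurableSpace β] {ν : Measure β} [SFinite ν]
    [NormedAddCommGroup E] [NormedSpace ℝ E] {f : α × β → E} (hf : StronglyMeasurable f)
    {S : Set (α × β)} (hS : MeasurableSet S) :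
    StronglyMeasurable fun a => ∫ b in Prod.mk a ⁻¹' S, f (a, b) ∂ν := by
  convert (hf.indicator hS).integral_prod_right' (ν := ν) using 2 with a
  rw [← integral_indicator (measurable_prodMk_left hS)]
  rfl

theorem norm_map_sub_le_of_norm_sub_le {E F : Type*} [SeminormedAddCommGroup E]
    [SeminormedAddCommGroup F] {f : E → F} {δ M r : ℝ} (hδ : 0 ≤ δ)
    (hf : ∀ x y, ‖f x - f y‖ ≤ δ * ‖x - y‖) {x y : E} (hxy : ‖x - y‖ ≤ M * r) :
    ‖f x - f y‖ ≤ δ * M * r := by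
  rw [mul_assoc]
  exact (hf x y).trans (mul_le_mul_of_nonneg_left hxy hδ)

theorem continuous_of_norm_sub_le {E F : Type*} [SeminormedAddCommGroup E]
    [SeminormedAddCommGroup F] {f : E → F} {δ : ℝ}
    (hf : ∀ x y, ‖f x - f y‖ ≤ δ * ‖x - y‖) : Continuous f :=
  (LipschitzWith.of_dist_le' fun x y => by simpa only [dist_eq_norm] using hf x y).continuous

theorem norm_apply_le_mul_exp {E F : Type*} [NormedAddCommGroup E] [NormedSpace ℝ E]
    [NormedAddCommGroup F] [NormedSpace ℝ F] {L : E →L[ℝ] F} {v : E} {γ σ K s t : ℝ}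
    (hL : ‖L‖ ≤ exp (γ * (t - s))) (hv : ‖v‖ ≤ K * exp (σ * s)) :
    ‖L v‖ ≤ K * exp (γ * t) * exp ((σ - γ) * s) :=
  calc ‖L v‖ ≤ exp (γ * (t - s)) * (K * exp (σ * s)) :=
        (L.le_opNorm v).trans (mul_le_mul hL hv (norm_nonneg _) (exp_pos _).le)
    _ = K * exp (γ * t) * exp ((σ - γ) * s) := by
        rw [mul_left_comm, ← exp_add, mul_assoc, ← exp_add]; ring_nf

section SemigroupConvolution

variable {E : Type*} [NormedAddCommGroup E] [NormedSpace ℝ E] {h : ℝ → E} {α β K σ t : ℝ}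

theorem stronglyMeasurable_exp_sub_smul_apply [CompleteSpace E] (T : E →L[ℝ] E)
    (hh : StronglyMeasurable h) :
    StronglyMeasurable fun p : ℝ × ℝ => NormedSpace.exp ((p.1 - p.2) • T) (h p.2) :=
  isBoundedBilinearMap_apply.continuous.comp_stronglyMeasurable
    (((continuous_exp_smul T).comp (continuous_fst.sub continuous_snd)).stronglyMeasurable.prodMk
      (hh.comp_measurable measurable_snd))

theorem aestronglyMeasurable_exp_sub_smul_apply [CompleteSpace E] (T : E →L[ℝ] E)
    (hh : StronglyMeasurable h) (t : ℝ) (μ : Measure ℝ) :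
    AEStronglyMeasurable (fun s => NormedSpace.exp ((t - s) • T) (h s)) μ :=
  ((stronglyMeasurable_exp_sub_smul_apply T hh).comp_measurable
    measurable_prodMk_left).aestronglyMeasurable

theorem integrableOn_Iic_exp_sub_smul_apply [CompleteSpace E] {T : E →L[ℝ] E}
    (hT : ∀ u, 0 ≤ u → ‖NormedSpace.exp (u • T)‖ ≤ exp (α * u)) (hασ : α < σ)
    (hh : StronglyMeasurable h) (hb : ∀ s ≤ t, ‖h s‖ ≤ K * exp (σ * s)) :
    IntegrableOn (fun s => NormedSpace.exp ((t - s) • T) (h s)) (Iic t) :=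
  integrableOn_Iic_of_norm_le_mul_exp (sub_pos.2 hασ)
    (aestronglyMeasurable_exp_sub_smul_apply T hh t _) fun s hs =>
      norm_apply_le_mul_exp (hT _ (sub_nonneg.2 hs)) (hb s hs)

theorem norm_setIntegral_Iic_exp_sub_smul_apply_le {T : E →L[ℝ] E}
    (hT : ∀ u, 0 ≤ u → ‖NormedSpace.exp (u • T)‖ ≤ exp (α * u)) (hασ : α < σ)
    (hb : ∀ s ≤ t, ‖h s‖ ≤ K * exp (σ * s)) :
    ‖∫ s in Iic t, NormedSpace.exp ((t - s) • T) (h s)‖ ≤ K * exp (σ * t) / (σ - α) :=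
  calc _ ≤ K * exp (α * t) * exp ((σ - α) * t) / (σ - α) :=
        norm_setIntegral_Iic_le_of_norm_le_mul_exp (sub_pos.2 hασ) fun s hs =>
          norm_apply_le_mul_exp (hT _ (sub_nonneg.2 hs)) (hb s hs)
    _ = K * exp (σ * t) / (σ - α) := by rw [mul_assoc, ← exp_add]; ring_nf

theorem integrableOn_Ioc_exp_sub_smul_apply [CompleteSpace E] {T : E →L[ℝ] E} {b : ℝ}
    (hT : ∀ u ≤ 0, ‖NormedSpace.exp (u • T)‖ ≤ exp (β * u))
    (hh : StronglyMeasurable h) (hb : ∀ s ∈ Ioc t b, ‖h s‖ ≤ K * exp (σ * s)) :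
    IntegrableOn (fun s => NormedSpace.exp ((t - s) • T) (h s)) (Ioc t b) :=
  integrableOn_Ioc_of_norm_le_mul_exp (aestronglyMeasurable_exp_sub_smul_apply T hh t _)
    fun s hs => norm_apply_le_mul_exp (hT _ (sub_nonpos.2 hs.1.le)) (hb s hs)

theorem norm_setIntegral_Ioc_exp_sub_smul_apply_le {T : E →L[ℝ] E} {b : ℝ}
    (hT : ∀ u ≤ 0, ‖NormedSpace.exp (u • T)‖ ≤ exp (β * u)) (hσβ : σ < β) (hK : 0 ≤ K)
    (hb : ∀ s ∈ Ioc t b, ‖h s‖ ≤ K * exp (σ * s)) :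
    ‖∫ s in Ioc t b, NormedSpace.exp ((t - s) • T) (h s)‖ ≤ K * exp (σ * t) / (β - σ) :=
  calc _ ≤ K * exp (β * t) * exp ((σ - β) * t) / -(σ - β) :=
        norm_setIntegral_Ioc_le_of_norm_le_mul_exp (sub_neg.2 hσβ) (by positivity) fun s hs =>
          norm_apply_le_mul_exp (hT _ (sub_nonpos.2 hs.1.le)) (hb s hs)
    _ = K * exp (σ * t) / (β - σ) := by rw [mul_assoc, ← exp_add, neg_sub]; ring_nf

end SemigroupConvolution

section LyapunovPerron

variable {X Y : Type*} [NormedAddCommGroup X] [NormedSpace ℝ X] [NormedAddCommGroup Y]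
  [NormedSpace ℝ Y] {A : X →L[ℝ] X} {B : Y →L[ℝ] Y} {F : X × Y → X} {G : X × Y → Y}
  {ψ ψ₁ ψ₂ : ℝ → X × Y} {α β δ σ M₁ M₂ D t : ℝ}

-- The Bochner integrals in `Umap` are junk zeros unless the iterates stay strongly measurable.
theorem stronglyMeasurable_Umap [CompleteSpace X] [CompleteSpace Y] (hF : Continuous F)
    (hG : Continuous G) (hψ : StronglyMeasurable ψ) (y : Y) :
    StronglyMeasurable (Umap A B F G ψ y) := by
  have hFψ := stronglyMeasurable_exp_sub_smul_apply A (hF.comp_stronglyMeasurable hψ)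
  have hGψ := stronglyMeasurable_exp_sub_smul_apply B (hG.comp_stronglyMeasurable hψ)
  refine StronglyMeasurable.prodMk ?_ (StronglyMeasurable.sub ?_ ?_)
  · exact hFψ.integral_restrict_preimage_prodMk (measurableSet_le measurable_snd measurable_fst)
  · exact ((continuous_exp_smul B).clm_apply continuous_const).stronglyMeasurable
  · exact (hGψ.integral_restrict_preimage_prodMk
      ((measurableSet_lt measurable_fst measurable_snd).inter
        (measurableSet_le measurable_snd measurable_const))).sub
      (hGψ.integral_restrict_preimage_prodMk
        ((measurableSet_lt measurable_const measurable_snd).inter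
          (measurableSet_le measurable_snd measurable_fst)))

theorem norm_Umap_fst_sub_le [CompleteSpace X]
    (hA : ∀ u, 0 ≤ u → ‖NormedSpace.exp (u • A)‖ ≤ exp (α * u)) (hασ : α < σ) (hδ : 0 ≤ δ)
    (hF : ∀ w₁ w₂, ‖F w₁ - F w₂‖ ≤ δ * ‖w₁ - w₂‖) (hF0 : F 0 = 0)
    (hψ₁ : StronglyMeasurable ψ₁) (hψ₂ : StronglyMeasurable ψ₂)
    (hb₁ : ∀ s ≤ 0, ‖ψ₁ s‖ ≤ M₁ * exp (σ * s)) (hb₂ : ∀ s ≤ 0, ‖ψ₂ s‖ ≤ M₂ * exp (σ * s))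
    (hd : ∀ s ≤ 0, ‖ψ₁ s - ψ₂ s‖ ≤ D * exp (σ * s)) (y₁ y₂ : Y) (ht : t ≤ 0) :
    ‖(Umap A B F G ψ₁ y₁ t).1 - (Umap A B F G ψ₂ y₂ t).1‖ ≤ δ / (σ - α) * D * exp (σ * t) := by
  have hint : ∀ {ψ : ℝ → X × Y} {M : ℝ}, StronglyMeasurable ψ →
      (∀ s ≤ 0, ‖ψ s‖ ≤ M * exp (σ * s)) →
      IntegrableOn (fun s => NormedSpace.exp ((t - s) • A) (F (ψ s))) (Iic t) :=
    fun hψ hb => integrableOn_Iic_exp_sub_smul_apply hA hασ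
      ((continuous_of_norm_sub_le hF).comp_stronglyMeasurable hψ) fun s hs => by
        simpa [hF0] using norm_map_sub_le_of_norm_sub_le hδ hF (y := 0)
          (by simpa using hb s (hs.trans ht))
  simp only [Umap]
  rw [← integral_sub (hint hψ₁ hb₁) (hint hψ₂ hb₂)]
  simp_rw [← map_sub]
  calc _ ≤ δ * D * exp (σ * t) / (σ - α) :=
        norm_setIntegral_Iic_exp_sub_smul_apply_le hA hασ fun s hs =>
          norm_map_sub_le_of_norm_sub_le hδ hF (hd s (hs.trans ht))
    _ = δ / (σ - α) * D * exp (σ * t) := by ring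

theorem norm_Umap_snd_sub_le [CompleteSpace Y]
    (hB : ∀ u ≤ 0, ‖NormedSpace.exp (u • B)‖ ≤ exp (β * u)) (hσβ : σ < β) (hδ : 0 ≤ δ)
    (hG : ∀ w₁ w₂, ‖G w₁ - G w₂‖ ≤ δ * ‖w₁ - w₂‖) (hG0 : G 0 = 0)
    (hψ₁ : StronglyMeasurable ψ₁) (hψ₂ : StronglyMeasurable ψ₂)
    (hb₁ : ∀ s ≤ 0, ‖ψ₁ s‖ ≤ M₁ * exp (σ * s)) (hb₂ : ∀ s ≤ 0, ‖ψ₂ s‖ ≤ M₂ * exp (σ * s))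
    (hd : ∀ s ≤ 0, ‖ψ₁ s - ψ₂ s‖ ≤ D * exp (σ * s)) (y₁ y₂ : Y) (ht : t ≤ 0) :
    ‖(Umap A B F G ψ₁ y₁ t).2 - (Umap A B F G ψ₂ y₂ t).2‖
      ≤ exp (β * t) * ‖y₁ - y₂‖ + δ / (β - σ) * D * exp (σ * t) := by
  have hD : 0 ≤ D := by simpa using (norm_nonneg _).trans (hd 0 le_rfl)
  have hint : ∀ {ψ : ℝ → X × Y} {M : ℝ}, StronglyMeasurable ψ →
      (∀ s ≤ 0, ‖ψ s‖ ≤ M * exp (σ * s)) →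
      IntegrableOn (fun s => NormedSpace.exp ((t - s) • B) (G (ψ s))) (Ioc t 0) :=
    fun hψ hb => integrableOn_Ioc_exp_sub_smul_apply hB
      ((continuous_of_norm_sub_le hG).comp_stronglyMeasurable hψ) fun s hs => by
        simpa [hG0] using norm_map_sub_le_of_norm_sub_le hδ hG (y := 0)
          (by simpa using hb s hs.2)
  simp only [Umap]
  rw [intervalIntegral.integral_of_le ht, intervalIntegral.integral_of_le ht,
    sub_sub_sub_comm, ← map_sub, ← integral_sub (hint hψ₁ hb₁) (hint hψ₂ hb₂)]
  simp_rw [← map_sub]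
  refine (norm_sub_le _ _).trans (add_le_add ?_ ?_)
  · exact ((NormedSpace.exp (t • B)).le_opNorm _).trans
      (mul_le_mul_of_nonneg_right (by simpa using hB t ht) (norm_nonneg _))
  · calc _ ≤ δ * D * exp (σ * t) / (β - σ) :=
          norm_setIntegral_Ioc_exp_sub_smul_apply_le hB hσβ (by positivity) fun s hs =>
            norm_map_sub_le_of_norm_sub_le hδ hG (hd s hs.2)
      _ = δ / (β - σ) * D * exp (σ * t) := by ring

theorem psiIter_map_zero (hH0 : ((F 0, G 0) : X × Y) = 0) (j : ℕ) :
    psiIter A B F G β j 0 = 0 := by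
  simp only [Prod.mk_eq_zero] at hH0
  induction j with
  | zero => funext t; simp [psiIter]
  | succ j ih => funext t; simp [psiIter, Umap, ih, hH0]

theorem stronglyMeasurable_psiIter [CompleteSpace X] [CompleteSpace Y] (hF : Continuous F)
    (hG : Continuous G) (j : ℕ) (y : Y) : StronglyMeasurable (psiIter A B F G β j y) := by
  induction j with
  | zero => exact (by fun_prop : Continuous fun t => ((0 : X), exp (β * t) • y)).stronglyMeasurable
  | succ j ih => exact stronglyMeasurable_Umap hF hG ih y

theorem norm_psiIter_succ_sub_le [CompleteSpace X] [CompleteSpace Y]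
    (hA : ∀ u, 0 ≤ u → ‖NormedSpace.exp (u • A)‖ ≤ exp (α * u))
    (hB : ∀ u ≤ 0, ‖NormedSpace.exp (u • B)‖ ≤ exp (β * u))
    (hασ : α < σ) (hσβ : σ < β) (hδ : 0 ≤ δ)
    (hH : ∀ w₁ w₂ : X × Y, ‖((F w₁, G w₁) : X × Y) - (F w₂, G w₂)‖ ≤ δ * ‖w₁ - w₂‖)
    (hH0 : ((F 0, G 0) : X × Y) = 0) {j : ℕ} {L : ℝ}
    (hj : ∀ y₁ y₂, ∀ t ≤ 0, ‖psiIter A B F G β j y₁ t - psiIter A B F G β j y₂ t‖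
      ≤ L * ‖y₁ - y₂‖ * exp (σ * t))
    (y₁ y₂ : Y) (ht : t ≤ 0) :
    ‖(psiIter A B F G β (j + 1) y₁ t).1 - (psiIter A B F G β (j + 1) y₂ t).1‖
        ≤ δ / (σ - α) * (L * ‖y₁ - y₂‖) * exp (σ * t) ∧
      ‖(psiIter A B F G β (j + 1) y₁ t).2 - (psiIter A B F G β (j + 1) y₂ t).2‖
        ≤ exp (β * t) * ‖y₁ - y₂‖ + δ / (β - σ) * (L * ‖y₁ - y₂‖) * exp (σ * t) := by
  have hF : ∀ w₁ w₂, ‖F w₁ - F w₂‖ ≤ δ * ‖w₁ - w₂‖ := fun w₁ w₂ =>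
    (norm_fst_le _).trans (hH w₁ w₂)
  have hG : ∀ w₁ w₂, ‖G w₁ - G w₂‖ ≤ δ * ‖w₁ - w₂‖ := fun w₁ w₂ =>
    (norm_snd_le _).trans (hH w₁ w₂)
  have hm := stronglyMeasurable_psiIter (A := A) (B := B) (β := β)
    (continuous_of_norm_sub_le hF) (continuous_of_norm_sub_le hG) j
  -- the iterates of `0` vanish, so the Lipschitz bound against `y₂ = 0` is a growth bound
  have hb : ∀ y, ∀ s ≤ 0, ‖psiIter A B F G β j y s‖ ≤ L * ‖y‖ * exp (σ * s) := fun y s hs => by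
    simpa [psiIter_map_zero hH0] using hj y 0 s hs
  exact ⟨norm_Umap_fst_sub_le hA hασ hδ hF (congrArg Prod.fst hH0) (hm y₁) (hm y₂)
      (hb y₁) (hb y₂) (hj y₁ y₂) y₁ y₂ ht,
    norm_Umap_snd_sub_le hB hσβ hδ hG (congrArg Prod.snd hH0) (hm y₁) (hm y₂)
      (hb y₁) (hb y₂) (hj y₁ y₂) y₁ y₂ ht⟩

theorem norm_psiIter_sub_le [CompleteSpace X] [CompleteSpace Y]
    (hA : ∀ u, 0 ≤ u → ‖NormedSpace.exp (u • A)‖ ≤ exp (α * u))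
    (hB : ∀ u ≤ 0, ‖NormedSpace.exp (u • B)‖ ≤ exp (β * u))
    (hασ : α < σ) (hσβ : σ < β) (hδ : 0 ≤ δ)
    (hH : ∀ w₁ w₂ : X × Y, ‖((F w₁, G w₁) : X × Y) - (F w₂, G w₂)‖ ≤ δ * ‖w₁ - w₂‖)
    (hH0 : ((F 0, G 0) : X × Y) = 0) {κ : ℝ} (hκα : δ / (σ - α) ≤ κ) (hκβ : δ / (β - σ) ≤ κ)
    (hκ1 : κ < 1) (j : ℕ) (y₁ y₂ : Y) (ht : t ≤ 0) :
    ‖psiIter A B F G β j y₁ t - psiIter A B F G β j y₂ t‖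
      ≤ (1 - κ)⁻¹ * ‖y₁ - y₂‖ * exp (σ * t) := by
  have hκ0 : 0 ≤ κ := (div_nonneg hδ (sub_pos.2 hσβ).le).trans hκβ
  have hC1 : 1 ≤ (1 - κ)⁻¹ := (one_le_inv₀ (by linarith)).2 (by linarith)
  have hC : 1 + κ * (1 - κ)⁻¹ = (1 - κ)⁻¹ := by
    field_simp [(by linarith : (0 : ℝ) < 1 - κ).ne']; ring
  have hβσ : ∀ t ≤ 0, exp (β * t) ≤ exp (σ * t) := fun t ht =>
    exp_le_exp.2 (mul_le_mul_of_nonpos_right hσβ.le ht)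
  induction j generalizing y₁ y₂ t with
  | zero =>
    calc _ = exp (β * t) * ‖y₁ - y₂‖ := by
          simp [psiIter, ← smul_sub, norm_smul, abs_of_pos (exp_pos _)]; positivity
      _ ≤ 1 * ‖y₁ - y₂‖ * exp (σ * t) := by nlinarith [norm_nonneg (y₁ - y₂), hβσ t ht]
      _ ≤ _ := by gcongr
  | succ j ih =>
    obtain ⟨hX, hY⟩ := norm_psiIter_succ_sub_le hA hB hασ hσβ hδ hH hH0
      (fun y₁ y₂ _ hs => ih y₁ y₂ hs) y₁ y₂ ht
    have hD : 0 ≤ (1 - κ)⁻¹ * ‖y₁ - y₂‖ * exp (σ * t) := by positivity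
    refine norm_prod_le_iff.2 ⟨hX.trans ?_, hY.trans ?_⟩
    · rw [mul_assoc]
      exact mul_le_of_le_one_left hD (hκα.trans hκ1.le)
    · calc _ ≤ exp (σ * t) * ‖y₁ - y₂‖ + κ * ((1 - κ)⁻¹ * ‖y₁ - y₂‖) * exp (σ * t) :=
            add_le_add (mul_le_mul_of_nonneg_right (hβσ t ht) (norm_nonneg _)) (by gcongr)
        _ = (1 + κ * (1 - κ)⁻¹) * ‖y₁ - y₂‖ * exp (σ * t) := by ring
        _ = _ := by rw [hC]

end LyapunovPerron

theorem approximate_unstable_leaf_lipschitz_general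
    {X Y : Type*} [NormedAddCommGroup X] [NormedSpace ℝ X] [CompleteSpace X]
    [NormedAddCommGroup Y] [NormedSpace ℝ Y] [CompleteSpace Y]
(A : X →L[ℝ] X) (B : Y →L[ℝ] Y) (α β δ σ κ : ℝ)
    (F : X × Y → X) (G : X × Y → Y)
    (hA : ∀ t : ℝ, 0 ≤ t → ‖NormedSpace.exp (t • A)‖ ≤ Real.exp (α * t))
    (hB : ∀ t : ℝ, 0 ≤ t → ‖NormedSpace.exp ((-t) • B)‖ ≤ Real.exp (-(β * t)))
    (hδ : 0 ≤ δ)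
    (hLip : ∀ w₁ w₂ : X × Y, ‖((F w₁, G w₁) : X × Y) - (F w₂, G w₂)‖ ≤ δ * ‖w₁ - w₂‖)
    (hH0 : ((F 0, G 0) : X × Y) = 0)
    (hσ : σ ∈ Set.Ioo (α + δ) (β - δ))
    (hκ : κ = max (δ / (β - σ)) (δ / (σ - α))) :
    ∀ j : ℕ, 1 ≤ j → ∀ y₁ y₂ : Y,
      ‖(psiIter A B F G β j y₁ 0).1 - (psiIter A B F G β j y₂ 0).1‖
        ≤ δ / (σ - α) * (1 / (1 - κ)) * ‖y₁ - y₂‖ := by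
  intro j hj y₁ y₂
  obtain ⟨k, rfl⟩ := Nat.exists_eq_add_of_le' hj
  have hασ : α < σ := by linarith [hσ.1]
  have hσβ : σ < β := by linarith [hσ.2]
  have hB' : ∀ u ≤ 0, ‖NormedSpace.exp (u • B)‖ ≤ exp (β * u) := fun u hu => by
    simpa using hB (-u) (neg_nonneg.2 hu)
  have hκ1 : κ < 1 := hκ ▸ max_lt ((div_lt_one (by linarith)).2 (by linarith [hσ.2]))
    ((div_lt_one (by linarith)).2 (by linarith [hσ.1]))
  have hX := (norm_psiIter_succ_sub_le hA hB' hασ hσβ hδ hLip hH0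
    (fun y₁ y₂ _ ht => norm_psiIter_sub_le hA hB' hασ hσβ hδ hLip hH0
      (hκ ▸ le_max_right _ _) (hκ ▸ le_max_left _ _) hκ1 k y₁ y₂ ht) y₁ y₂ le_rfl).1
  simpa [one_div, mul_assoc] using hX

/-- **Lipschitz bound for the approximate unstable-leaf maps Ψ^j.** -/
theorem approximate_unstable_leaf_lipschitz
    {X Y : Type*} [NormedAddCommGroup X] [NormedSpace ℝ X] [CompleteSpace X]
    [NormedAddCommGroup Y] [NormedSpace ℝ Y] [CompleteSpace Y]
(A : X →L[ℝ] X) (B : Y →L[ℝ] Y) (α β δ σ κ : ℝ)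
    (F : X × Y → X) (G : X × Y → Y)
    (hA : ∀ t : ℝ, 0 ≤ t → ‖NormedSpace.exp (t • A)‖ ≤ Real.exp (α * t))
    (hB : ∀ t : ℝ, 0 ≤ t → ‖NormedSpace.exp ((-t) • B)‖ ≤ Real.exp (-(β * t)))
    (hδ : 0 ≤ δ)
    (hLip : ∀ w₁ w₂ : X × Y, ‖((F w₁, G w₁) : X × Y) - (F w₂, G w₂)‖ ≤ δ * ‖w₁ - w₂‖)
    (hH0 : ((F 0, G 0) : X × Y) = 0)
    (hgap : 2 * δ < β - α)
    (hσ : σ ∈ Set.Ioo (α + δ) (β - δ))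
    (hκ : κ = max (δ / (β - σ)) (δ / (σ - α))) :
    ∀ j : ℕ, 1 ≤ j → ∀ y₁ y₂ : Y,
      ‖(psiIter A B F G β j y₁ 0).1 - (psiIter A B F G β j y₂ 0).1‖
        ≤ δ / (σ - α) * (1 / (1 - κ)) * ‖y₁ - y₂‖ :=
  approximate_unstable_leaf_lipschitz_general A B α β δ σ κ F G hA hB hδ hLip hH0 hσ hκ
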